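/- For n odd, σ > 0, and k > 0, the integral over the n-dimensional ball of radius k of the isotropic Gaussian density with variance σ^2 per coordinate equals √(2/π) · exp(-k^2/(2σ^2)) · Σ'_{j≥n} k^j/(σ^j j!!), where the primed sum runs over j = n, n+2, n+4, .... -/

import Mathlib

/-!
In polar coordinates the mass of the ball is `n · vol(B₁) · ∫₀ᵏ rⁿ⁻¹ e^{-r²/(2σ²)} dr`, and in odd
dimension `n = 2m + 1` the unit ball has volume `πᵐ 2ᵐ⁺¹ / n‼`, which combines with the normalising
constant into `√(2/π) / σⁿ`.
For the radial integral, the derivative of `r^{q+1} e^{-r²/(2σ²)} / (σ^{q+1} (q+1)‼)` is the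
difference of the normalised densities `(q+1) r^q e^{-r²/(2σ²)} / (σ^{q+1} (q+1)‼)` for `q` and
`q + 2`, so the series telescopes; its remainder is at most `(k/σ)²` times a term of the (bounded,
hence convergent) series of nonnegative terms, so it tends to zero.
-/

open Real MeasureTheory Nat Filter Topology

open Metric Set in
theorem MeasureTheory.setIntegral_closedBall_fun_norm_addHaar {E F : Type*}
    [NormedAddCommGroup E] [NormedSpace ℝ E] [FiniteDimensional ℝ E] [MeasurableSpace E]
    [BorelSpace E] [Nontrivial E] [NormedAddCommGroup F] [NormedSpace ℝ F]
    (μ : Measure E) [μ.IsAddHaarMeasure] (f : ℝ → F) {r : ℝ} (hr : 0 ≤ r) :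
    ∫ x in closedBall (0 : E) r, f ‖x‖ ∂μ =
      Module.finrank ℝ E • μ.real (ball 0 1) •
        ∫ y in (0 : ℝ)..r, y ^ (Module.finrank ℝ E - 1) • f y := by
  have hind : ∀ x : E,
      (closedBall (0 : E) r).indicator (fun x => f ‖x‖) x = (Iic r).indicator f ‖x‖ := by
    simp [indicator]
  rw [← integral_indicator measurableSet_closedBall]
  simp_rw [hind]
  rw [integral_fun_norm_addHaar μ ((Iic r).indicator f), intervalIntegral.integral_of_le hr,
    ← Ioi_inter_Iic, ← setIntegral_indicator measurableSet_Iic]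
  congr 3 with y
  by_cases hy : y ≤ r <;> simp [indicator, hy]

namespace GaussianBall

variable (σ : ℝ)

noncomputable def seriesTerm (q : ℕ) (t : ℝ) : ℝ := t ^ q / (σ ^ q * (q‼ : ℝ))

noncomputable def powDensity (q : ℕ) (s : ℝ) : ℝ :=
  (q + 1) / (σ ^ (q + 1) * ((q + 1)‼ : ℝ)) * (s ^ q * exp (-s ^ 2 / (2 * σ ^ 2)))

noncomputable def powIntegral (q : ℕ) (t : ℝ) : ℝ := ∫ s in (0 : ℝ)..t, powDensity σ q s

variable {σ}

theorem continuous_powDensity (q : ℕ) : Continuous (powDensity σ q) := by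
  unfold powDensity; fun_prop

theorem hasDerivAt_seriesTerm_mul_exp (hσ : σ ≠ 0) (q : ℕ) (s : ℝ) :
    HasDerivAt (fun u => seriesTerm σ (q + 1) u * exp (-u ^ 2 / (2 * σ ^ 2)))
      (powDensity σ q s - powDensity σ (q + 2) s) s := by
  have hexp : HasDerivAt (fun u => exp (-u ^ 2 / (2 * σ ^ 2)))
      (exp (-s ^ 2 / (2 * σ ^ 2)) * (-(2 * s) / (2 * σ ^ 2))) s := by
    simpa using ((hasDerivAt_pow 2 s).neg.div_const (2 * σ ^ 2)).exp
  have hpow := (hasDerivAt_pow (q + 1) s).div_const (σ ^ (q + 1) * ((q + 1)‼ : ℝ))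
  refine (hpow.mul hexp).congr_deriv ?_
  have h1 : ((q + 1 + 2)‼ : ℝ) = (q + 3) * (q + 1)‼ := by
    rw [Nat.doubleFactorial_add_two]; push_cast; ring
  have := (Nat.doubleFactorial_pos (q + 1)).ne'
  simp only [powDensity, Nat.add_sub_cancel, show q + 2 + 1 = q + 1 + 2 by ring, h1]
  field_simp
  push_cast
  ring

theorem seriesTerm_mul_exp_eq_sub (hσ : σ ≠ 0) (q : ℕ) (t : ℝ) :
    seriesTerm σ (q + 1) t * exp (-t ^ 2 / (2 * σ ^ 2)) =
      powIntegral σ q t - powIntegral σ (q + 2) t := by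
  rw [powIntegral, powIntegral, ← intervalIntegral.integral_sub
    ((continuous_powDensity q).intervalIntegrable _ _)
    ((continuous_powDensity (q + 2)).intervalIntegrable _ _),
    intervalIntegral.integral_eq_sub_of_hasDerivAt
      (fun s _ => hasDerivAt_seriesTerm_mul_exp hσ q s)
      (((continuous_powDensity q).sub (continuous_powDensity (q + 2))).intervalIntegrable _ _)]
  simp [seriesTerm]

theorem seriesTerm_nonneg (hσ : 0 < σ) (q : ℕ) {t : ℝ} (ht : 0 ≤ t) : 0 ≤ seriesTerm σ q t := by
  unfold seriesTerm; positivity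

theorem powIntegral_nonneg (hσ : 0 < σ) (q : ℕ) {t : ℝ} (ht : 0 ≤ t) : 0 ≤ powIntegral σ q t :=
  intervalIntegral.integral_nonneg ht fun s hs => by
    have := hs.1
    unfold powDensity; positivity

theorem powIntegral_add_two_le (hσ : 0 < σ) (q : ℕ) {t : ℝ} (ht : 0 ≤ t) :
    powIntegral σ (q + 2) t ≤ (t / σ) ^ 2 * seriesTerm σ (q + 1) t := by
  have hbound : ∀ s ∈ Set.Icc 0 t, powDensity σ (q + 2) s ≤
      ((q + 2 : ℕ) + 1) / (σ ^ (q + 2 + 1) * ((q + 2 + 1)‼ : ℝ)) * t ^ (q + 2) := by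
    intro s ⟨hs0, hst⟩
    unfold powDensity
    gcongr
    calc s ^ (q + 2) * exp (-s ^ 2 / (2 * σ ^ 2)) ≤ s ^ (q + 2) * 1 := by
          gcongr
          rw [exp_le_one_iff]
          have : 0 ≤ s ^ 2 / (2 * σ ^ 2) := by positivity
          linarith [neg_div (2 * σ ^ 2) (s ^ 2)]
      _ ≤ t ^ (q + 2) := by rw [mul_one]; gcongr
  have hint := intervalIntegral.integral_mono_on ht
    ((continuous_powDensity (q + 2)).intervalIntegrable 0 t)
    (intervalIntegrable_const (μ := volume)) hbound
  rw [intervalIntegral.integral_const, sub_zero, smul_eq_mul] at hint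
  refine hint.trans_eq ?_
  have h1 : ((q + 2 + 1)‼ : ℝ) = (q + 3) * (q + 1)‼ := by
    rw [show q + 2 + 1 = q + 1 + 2 by ring, Nat.doubleFactorial_add_two]; push_cast; ring
  have := (Nat.doubleFactorial_pos (q + 1)).ne'
  rw [h1, seriesTerm]
  field_simp
  push_cast
  ring

theorem sum_range_seriesTerm_mul_exp (hσ : σ ≠ 0) (p N : ℕ) (t : ℝ) :
    ∑ j ∈ Finset.range N, seriesTerm σ (p + 1 + 2 * j) t * exp (-t ^ 2 / (2 * σ ^ 2)) =
      powIntegral σ p t - powIntegral σ (p + 2 * N) t := by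
  simp_rw [add_right_comm p 1, seriesTerm_mul_exp_eq_sub hσ]
  exact Finset.sum_range_sub' (fun j => powIntegral σ (p + 2 * j) t) N

theorem hasSum_seriesTerm_mul_exp (hσ : 0 < σ) (p : ℕ) {t : ℝ} (ht : 0 ≤ t) :
    HasSum (fun j => seriesTerm σ (p + 1 + 2 * j) t * exp (-t ^ 2 / (2 * σ ^ 2)))
      (powIntegral σ p t) := by
  have hnonneg : ∀ j, 0 ≤ seriesTerm σ (p + 1 + 2 * j) t * exp (-t ^ 2 / (2 * σ ^ 2)) :=
    fun j => mul_nonneg (seriesTerm_nonneg hσ _ ht) (exp_pos _).le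
  have hsummable : Summable fun j => seriesTerm σ (p + 1 + 2 * j) t :=
    (summable_mul_right_iff (exp_pos _).ne').mp <|
      summable_of_sum_range_le (c := powIntegral σ p t) hnonneg fun N => by
        rw [sum_range_seriesTerm_mul_exp hσ.ne']
        linarith [powIntegral_nonneg hσ (p + 2 * N) ht]
  have htail : Tendsto (fun N => powIntegral σ (p + 2 * N) t) atTop (𝓝 0) := by
    rw [← tendsto_add_atTop_iff_nat 1]
    have hterm := (hsummable.tendsto_atTop_zero).const_mul ((t / σ) ^ 2)
    rw [mul_zero] at hterm
    refine squeeze_zero (fun N => powIntegral_nonneg hσ _ ht) (fun N => ?_) hterm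
    have h := powIntegral_add_two_le hσ (p + 2 * N) ht
    rwa [show p + 2 * N + 2 = p + 2 * (N + 1) by ring, add_right_comm] at h
  rw [hasSum_iff_tendsto_nat_of_nonneg hnonneg]
  simp_rw [sum_range_seriesTerm_mul_exp hσ.ne']
  simpa using tendsto_const_nhds.sub htail

end GaussianBall

theorem rpow_two_pi_mul_sq_neg_odd_half (m : ℕ) {σ : ℝ} (hσ : 0 < σ) :
    (2 * π * σ ^ 2) ^ (-(2 * m + 1 : ℝ) / 2) * (π ^ m * 2 ^ (m + 1)) =
      √(2 / π) / σ ^ (2 * m + 1) := by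
  have hx : 0 < 2 * π * σ ^ 2 := by positivity
  have hrpow : (2 * π * σ ^ 2) ^ (-(2 * m + 1 : ℝ) / 2) =
      ((2 * π * σ ^ 2) ^ m * √(2 * π * σ ^ 2))⁻¹ := by
    rw [show -(2 * m + 1 : ℝ) / 2 = -((m : ℝ) + 1 / 2) by ring, rpow_neg hx.le, rpow_add hx,
      rpow_natCast, sqrt_eq_rpow]
  have hsqrt : √(2 * π * σ ^ 2) = √2 * √π * σ := by
    rw [sqrt_mul (by positivity), sqrt_mul zero_le_two, sqrt_sq hσ.le]
  rw [hrpow, hsqrt, sqrt_div zero_le_two]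
  have := sqrt_pos.mpr pi_pos
  field_simp
  rw [mul_pow, mul_pow, ← pow_mul, pow_mul', sq_sqrt zero_le_two]
  ring

open GaussianBall in
theorem stmt11_general (n : ℕ) (hno : Odd n) (σ k : ℝ) (hσ : 0 < σ) (hk : 0 < k) :
    (∫ x in Metric.closedBall (0 : EuclideanSpace ℝ (Fin n)) k,
        (2 * π * σ ^ 2) ^ (-(n : ℝ) / 2) * Real.exp (-‖x‖ ^ 2 / (2 * σ ^ 2))) =
      Real.sqrt (2 / π) * Real.exp (-k ^ 2 / (2 * σ ^ 2)) *
        ∑' j : ℕ, k ^ (n + 2 * j) / (σ ^ (n + 2 * j) * ((n + 2 * j)‼ : ℝ)) := by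
  obtain ⟨m, rfl⟩ := hno
  have hvol : volume.real (Metric.ball (0 : EuclideanSpace ℝ (Fin (2 * m + 1))) 1) =
      π ^ m * 2 ^ (m + 1) / ((2 * m + 1)‼ : ℝ) := by
    rw [measureReal_def, InnerProductSpace.volume_ball_of_dim_odd (k := m) (by simp)]
    simp [ENNReal.toReal_ofReal (by positivity : (0 : ℝ) ≤ π ^ m * 2 ^ (m + 1) / (2 * m + 1)‼)]
  have hseries := (hasSum_seriesTerm_mul_exp hσ (2 * m) hk.le).tsum_eq
  simp only [tsum_mul_right, seriesTerm, powIntegral, powDensity,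
    intervalIntegral.integral_const_mul] at hseries
  rw [integral_const_mul, setIntegral_closedBall_fun_norm_addHaar volume
    (fun r => exp (-r ^ 2 / (2 * σ ^ 2))) hk.le]
  simp only [finrank_euclideanSpace_fin, hvol, Nat.add_sub_cancel, smul_eq_mul, nsmul_eq_mul]
  rw [mul_assoc (√(2 / π)), mul_comm (rexp _), hseries]
  push_cast
  linear_combination ((2 * m + 1) / ((2 * m + 1)‼ : ℝ) *
    ∫ y in (0 : ℝ)..k, y ^ (2 * m) * rexp (-y ^ 2 / (2 * σ ^ 2))) *
      rpow_two_pi_mul_sq_neg_odd_half m hσ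

/-- For odd `n`, the isotropic Gaussian of variance `σ^2` per coordinate assigns mass
`√(2/π) exp(-k^2/(2σ^2)) ∑'_{j ≥ n, j ≡ n [2]} k^j/(σ^j j‼)` to the ball of radius `k`. -/
theorem stmt11 (n : ℕ) (hn : 0 < n) (hno : Odd n) (σ k : ℝ) (hσ : 0 < σ) (hk : 0 < k) :
    (∫ x in Metric.closedBall (0 : EuclideanSpace ℝ (Fin n)) k,
        (2 * π * σ ^ 2) ^ (-(n : ℝ) / 2) * Real.exp (-‖x‖ ^ 2 / (2 * σ ^ 2))) =
      Real.sqrt (2 / π) * Real.exp (-k ^ 2 / (2 * σ ^ 2)) *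
        ∑' j : ℕ, k ^ (n + 2 * j) / (σ ^ (n + 2 * j) * ((n + 2 * j)‼ : ℝ)) :=
  stmt11_general n hno σ k hσ hk
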